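/- Let n be even and τ = (n/2, (n/2−1)^4, (n/2−2)^4, …, 1^4). Then for every t ∈ {1,…,n/2}, γ_t(τ) = (n/2 − t + 1)(n − 2t + 1). -/
import Mathlib


/-- `γ_t(σ) = Σ_i max{0, σ_i − t + 1}` for a diagram `σ` (as truncated subtraction). -/
def gammaFn (σ : List ℕ) (t : ℕ) : ℕ := (σ.map (fun a => a + 1 - t)).sum

/-- For even `n`, the diagram `(n/2, (n/2−1)⁴, (n/2−2)⁴, …, 1⁴)`. -/
def tauPfEven (n : ℕ) : List ℕ :=
  [n / 2] ++ (List.range (n / 2 - 1)).reverse.flatMap (fun j => List.replicate 4 (j + 1))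

lemma flat_sum (s d : ℕ) :
    ((((List.range (s + d)).reverse.flatMap (fun j => List.replicate 4 (j + 1))).map
      (fun a => a + 1 - (s + 1))).sum) = 2 * d * (d + 1) := by
  induction d with
  | zero =>
    simp only [Nat.add_zero, Nat.mul_zero, Nat.zero_mul]
    apply List.sum_eq_zero
    intro x hx
    simp only [List.mem_map, List.mem_flatMap, List.mem_reverse, List.mem_range,
      List.mem_replicate] at hx
    obtain ⟨a, ⟨j, hj, _, rfl⟩, rfl⟩ := hx
    omega
  | succ d ih =>
    have h : s + (d + 1) = (s + d) + 1 := by omega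
    rw [h, List.range_succ]
    simp only [List.reverse_append, List.reverse_singleton, List.singleton_append,
      List.flatMap_cons, List.map_append, List.sum_append, ih]
    simp only [List.map_replicate, List.sum_replicate, smul_eq_mul]
    have : s + d + 1 + 1 - (s + 1) = d + 1 := by omega
    rw [this]
    ring

lemma key (s d : ℕ) : gammaFn (tauPfEven (2 * (s + 1 + d))) (s + 1) = (d + 1) * (2 * d + 1) := by
  unfold gammaFn tauPfEven
  have h2 : 2 * (s + 1 + d) / 2 = s + 1 + d := by omega
  rw [h2]
  have h3 : s + 1 + d - 1 = s + d := by omega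
  rw [h3]
  simp only [List.singleton_append, List.map_cons, List.sum_cons, flat_sum]
  have : s + 1 + d + 1 - (s + 1) = d + 1 := by omega
  rw [this]
  ring

/-- For even `n` and `1 ≤ t ≤ n/2`, `γ_t(τ) = (n/2 − t + 1)(n − 2t + 1)`. -/
theorem statement13 (n t : ℕ) (heven : Even n) (ht : 1 ≤ t) (htn : t ≤ n / 2) :
    gammaFn (tauPfEven n) t = (n / 2 - t + 1) * (n - 2 * t + 1) := by
  obtain ⟨m, rfl⟩ := heven
  obtain ⟨s, rfl⟩ : ∃ s, t = s + 1 := ⟨t - 1, by omega⟩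
  have hm : m + m = 2 * m := by ring
  rw [hm] at *
  have hmt : s + 1 ≤ m := by omega
  obtain ⟨d, rfl⟩ : ∃ d, m = s + 1 + d := ⟨m - (s + 1), by omega⟩
  rw [key]
  have h1 : 2 * (s + 1 + d) / 2 - (s + 1) + 1 = d + 1 := by omega
  have h2 : 2 * (s + 1 + d) - 2 * (s + 1) + 1 = 2 * d + 1 := by omega
  rw [h1, h2]
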